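/- arXiv:1812.01218 — 2 statements merged into one kernel-verified Lean document; each statement's English description precedes it below -/
import Mathlib

section
/- Let M be a binary matroid with rank function r, T ⊆ E(M), and let r' be the rank function of M'_T. If A ⊆ E(M) (so a ∉ A) and A contains a circuit C of M with |C ∩ T| odd, then r'(A) = r(A) + 1; if A contains no such circuit, then r'(A) = r(A). -/
open Set

variable {α : Type*}

/-- The rank of a set `X` in a matroid `M`: the maximum size of an independent subset of `X`. -/
noncomputable def mrank (M : Matroid α) (X : Set α) : ℕ :=
  sSup {n | ∃ I, M.Indep I ∧ I ⊆ X ∧ I.ncard = n}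

/-- `(A, B)` is a `k`-separation of `M`: a partition of the ground set with both sides of
size at least `k` and `r(A) + r(B) - r(M) ≤ k - 1` (written additively). -/
def IsKSeparation (M : Matroid α) (k : ℕ) (A B : Set α) : Prop :=
  A ∪ B = M.E ∧ Disjoint A B ∧ k ≤ A.ncard ∧ k ≤ B.ncard ∧
    mrank M A + mrank M B + 1 ≤ mrank M M.E + k

/-- `M` is `n`-connected if it has no `k`-separation for any `k < n`. -/
def NConnected (M : Matroid α) (n : ℕ) : Prop :=
  ∀ k A B, 1 ≤ k → k < n → ¬ IsKSeparation M k A B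

/-- A circuit is a minimal dependent set. -/
def MCircuit (M : Matroid α) (C : Set α) : Prop := Minimal M.Dep C

/-- A cocircuit is a circuit of the dual matroid. -/
def MCocircuit (M : Matroid α) (C : Set α) : Prop := MCircuit M✶ C

/-- A loop is a dependent singleton. -/
def MLoop (M : Matroid α) (e : α) : Prop := M.Dep {e}

/-- A coloop is a loop of the dual, i.e. an element lying in every base. -/
def MColoop (M : Matroid α) (e : α) : Prop := M✶.Dep {e}

/-- `M` is the vector matroid of the family of vectors `φ` over `GF(2)`:
a set is independent iff it lies in the ground set and the corresponding
vectors are linearly independent. -/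
def IsRep {W : Type*} [AddCommGroup W] [Module (ZMod 2) W] (M : Matroid α) (φ : α → W) : Prop :=
  ∀ I : Set α, M.Indep I ↔ I ⊆ M.E ∧ LinearIndependent (ZMod 2) (I.restrict φ)

open scoped Classical in
/-- The columns of the element splitting matrix `A'_T`: each original column gets an extra
coordinate (the new row), equal to `1` exactly on the columns labelled by `T`, and a new
column `a` which is `1` in the new row and `0` elsewhere. -/
noncomputable def splitRep {W : Type*} [AddCommGroup W] [Module (ZMod 2) W]
    (φ : α → W) (T : Set α) (a : α) : α → W × ZMod 2 :=
  fun x => if x = a then (0, 1) else (φ x, if x ∈ T then 1 else 0)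

/-- `N` is the element splitting matroid `M'_T` of the binary matroid `M` (represented by `φ`)
with respect to `T`, with new element `a`. -/
def IsEleSplit {W : Type*} [AddCommGroup W] [Module (ZMod 2) W]
    (M : Matroid α) (φ : α → W) (T : Set α) (a : α) (N : Matroid α) : Prop :=
  a ∉ M.E ∧ N.E = insert a M.E ∧ IsRep N (splitRep φ T a)

/-- `M` is the contraction `N / a` of the single element `a` from `N`. -/
def ContractElemEq (N : Matroid α) (a : α) (M : Matroid α) : Prop :=
  M.E = N.E \ {a} ∧ ∀ I : Set α,
    M.Indep I ↔ a ∉ I ∧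
      ((N.Indep {a} ∧ N.Indep (insert a I)) ∨ (¬ N.Indep {a} ∧ N.Indep I))

/-!
The column of `x ∈ A` in `M'_T` is `(φ x, [x ∈ T])`, so projecting away the new coordinate maps the
span of these columns onto the span of the columns of `A` in `M`. The kernel of this projection is
spanned by the new unit vector `(0, 1)` if that vector lies in the span, and is zero otherwise;
hence `r'(A) = r(A) + 1` exactly when `(0, 1)` is a sum of columns of `A`, i.e. when some `S ⊆ A`
has zero column sum in `M` and meets `T` oddly. Removing circuits one at a time writes such an `S`
as a disjoint union of circuits of `M`, one of which must then meet `T` oddly; conversely, the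
columns of a circuit of a binary matroid sum to zero.
-/

open Module Submodule

section LinearAlgebra

variable {K V ι : Type*} [DivisionRing K] [AddCommGroup V] [Module K V]

theorem LinearIndepOn.ncard_eq_finrank_span_image {v : ι → V} {I : Set ι}
    (hI : LinearIndepOn K v I) (hIfin : I.Finite) : I.ncard = finrank K (span K (v '' I)) := by
  have := hIfin.fintype
  rw [Set.image_eq_range, finrank_span_eq_card hI, Set.ncard_eq_toFinset_card', Set.toFinset_card]

theorem finrank_span_image_eq_sSup {v : ι → V} {A : Set ι} (hA : A.Finite) :
    finrank K (span K (v '' A)) =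
      sSup {n | ∃ I, LinearIndepOn K v I ∧ I ⊆ A ∧ I.ncard = n} := by
  have := FiniteDimensional.span_of_finite K (hA.image v)
  refine (IsGreatest.csSup_eq ⟨?_, ?_⟩).symm
  · obtain ⟨I, hIA, -, hAI, hI⟩ := exists_linearIndepOn_extension (linearIndepOn_empty K v)
      (empty_subset A)
    refine ⟨I, hI, hIA, ?_⟩
    rw [hI.ncard_eq_finrank_span_image (hA.subset hIA),
      le_antisymm (span_mono (image_mono hIA)) (span_le.2 hAI)]
  · rintro _ ⟨I, hI, hIA, rfl⟩
    rw [hI.ncard_eq_finrank_span_image (hA.subset hIA)]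
    exact Submodule.finrank_mono (span_mono (image_mono hIA))

open scoped Classical in
theorem finrank_eq_finrank_map_fst_add (P : Submodule K (V × K)) [FiniteDimensional K P] :
    finrank K P = finrank K (P.map (LinearMap.fst K V K)) +
      if ((0 : V), (1 : K)) ∈ P then 1 else 0 := by
  set f := LinearMap.fst K V K ∘ₗ P.subtype
  have hker : ∀ x ∈ LinearMap.ker f, ∃ c : K, (x : V × K) = c • ((0 : V), (1 : K)) :=
    fun x hx => ⟨(x : V × K).2, Prod.ext (by simpa [f] using hx) (by simp)⟩
  rw [← f.finrank_range_add_finrank_ker, LinearMap.range_comp, range_subtype]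
  congr 1
  split_ifs with h
  · have : LinearMap.ker f = span K {⟨((0 : V), (1 : K)), h⟩} := by
      apply le_antisymm
      · intro x hx
        obtain ⟨c, hc⟩ := hker x hx
        exact mem_span_singleton.2 ⟨c, Subtype.ext hc.symm⟩
      · rw [span_singleton_le_iff_mem]
        rfl
    rw [this, finrank_span_singleton (by simp)]
  · rw [finrank_eq_zero, eq_bot_iff]
    intro x hx
    obtain ⟨c, hc⟩ := hker x hx
    rcases eq_or_ne c 0 with rfl | hc0
    · exact (mem_bot K).2 (Subtype.ext (by simpa using hc))
    · have := P.smul_mem c⁻¹ x.2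
      rw [hc, smul_smul, inv_mul_cancel₀ hc0, one_smul] at this
      exact absurd this h

end LinearAlgebra

section ZModTwo

variable {ι V : Type*} [AddCommGroup V] [Module (ZMod 2) V] {v : ι → V}

theorem Finsupp.linearCombination_zmod_two (l : ι →₀ ZMod 2) :
    Finsupp.linearCombination (ZMod 2) v l = ∑ i ∈ l.support, v i := by
  rw [Finsupp.linearCombination_apply, Finsupp.sum]
  refine Finset.sum_congr rfl fun i hi => ?_
  rw [(by decide : ∀ c : ZMod 2, c ≠ 0 → c = 1) _ (Finsupp.mem_support_iff.1 hi), one_smul]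

theorem mem_span_image_iff_exists_finset_sum {s : Set ι} {x : V} :
    x ∈ span (ZMod 2) (v '' s) ↔ ∃ t : Finset ι, ↑t ⊆ s ∧ ∑ i ∈ t, v i = x := by
  constructor
  · rw [Finsupp.mem_span_image_iff_linearCombination]
    rintro ⟨l, hl, rfl⟩
    exact ⟨l.support, hl, (Finsupp.linearCombination_zmod_two l).symm⟩
  · rintro ⟨t, hts, rfl⟩
    exact sum_mem fun i hi => subset_span (mem_image_of_mem v (hts hi))

theorem not_linearIndepOn_iff_exists_finset_sum_eq_zero {s : Set ι} :
    ¬ LinearIndepOn (ZMod 2) v s ↔ ∃ t : Finset ι, ↑t ⊆ s ∧ t.Nonempty ∧ ∑ i ∈ t, v i = 0 := by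
  constructor
  · rw [linearDepOn_iff']
    rintro ⟨l, hl, hsum, hl0⟩
    exact ⟨l.support, hl, Finsupp.support_nonempty_iff.2 hl0,
      (Finsupp.linearCombination_zmod_two l).symm.trans hsum⟩
  · rintro ⟨t, hts, ⟨i, hi⟩, hsum⟩ hv
    exact one_ne_zero (linearIndepOn_iff'.1 hv t (fun _ => 1) hts (by simpa using hsum) i hi)

end ZModTwo

namespace IsRep

variable {W : Type*} [AddCommGroup W] [Module (ZMod 2) W] {M : Matroid α} {φ : α → W}

theorem mrank_eq_finrank_span (hM : IsRep M φ) {A : Set α} (hA : A ⊆ M.E) (hAfin : A.Finite) :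
    mrank M A = finrank (ZMod 2) (span (ZMod 2) (φ '' A)) := by
  rw [mrank, finrank_span_image_eq_sSup hAfin]
  refine congrArg sSup (Set.ext fun n => exists_congr fun I => ?_)
  rw [hM]
  exact ⟨fun ⟨⟨_, hI⟩, hIA, hn⟩ => ⟨hI, hIA, hn⟩,
    fun ⟨hI, hIA, hn⟩ => ⟨⟨hIA.trans hA, hI⟩, hIA, hn⟩⟩

theorem dep_iff (hM : IsRep M φ) {X : Set α} :
    M.Dep X ↔ X ⊆ M.E ∧ ∃ t : Finset α, ↑t ⊆ X ∧ t.Nonempty ∧ ∑ x ∈ t, φ x = 0 := by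
  rw [Matroid.dep_iff, hM, ← not_linearIndepOn_iff_exists_finset_sum_eq_zero]
  exact ⟨fun ⟨h, hX⟩ => ⟨hX, fun hli => h ⟨hX, hli⟩⟩, fun ⟨hX, h⟩ => ⟨fun hI => h hI.2, hX⟩⟩

theorem sum_eq_zero_of_isCircuit (hM : IsRep M φ) {C : Finset α} (hC : M.IsCircuit ↑C) :
    ∑ x ∈ C, φ x = 0 := by
  obtain ⟨hCE, t, htC, htne, ht⟩ := hM.dep_iff.1 hC.dep
  have htdep : M.Dep ↑t := hM.dep_iff.2 ⟨htC.trans hCE, t, subset_rfl, htne, ht⟩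
  rwa [← Finset.coe_injective (hC.eq_of_subset htdep htC)]

theorem sum_eq_zero_of_forall_isCircuit {G : Type*} [AddCommGroup G] (hM : IsRep M φ)
    (χ : α → G) {S : Finset α} (hSE : ↑S ⊆ M.E) (hS : ∑ x ∈ S, φ x = 0)
    (hχ : ∀ C ⊆ S, M.IsCircuit ↑C → ∑ x ∈ C, χ x = 0) : ∑ x ∈ S, χ x = 0 := by
  classical
  induction S using Finset.strongInduction with
  | H S ih =>
    rcases S.eq_empty_or_nonempty with rfl | hne
    · exact Finset.sum_empty
    obtain ⟨C, hCS, hC⟩ :=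
      (hM.dep_iff.2 ⟨hSE, S, subset_rfl, hne, hS⟩).exists_isCircuit_subset
    lift C to Finset α using S.finite_toSet.subset hCS
    rw [Finset.coe_subset] at hCS
    have hrest : ∑ x ∈ S \ C, φ x = 0 := by
      rw [Finset.sum_sdiff_eq_sub hCS, hS, hM.sum_eq_zero_of_isCircuit hC, sub_zero]
    rw [← Finset.sum_sdiff hCS, hχ C hCS hC, add_zero]
    exact ih _ (Finset.sdiff_ssubset hCS (Finset.coe_nonempty.1 hC.nonempty))
      ((Finset.coe_subset.2 Finset.sdiff_subset).trans hSE) hrest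
      fun D hD => hχ D (hD.trans Finset.sdiff_subset)

end IsRep

theorem Finset.natCast_ncard_coe_inter {R : Type*} [AddCommMonoidWithOne R] (S : Finset α)
    (T : Set α) [DecidablePred (· ∈ T)] :
    ((((S : Set α) ∩ T).ncard : ℕ) : R) = ∑ x ∈ S, if x ∈ T then 1 else 0 := by
  rw [← Finset.natCast_card_filter, ← Set.ncard_coe_finset, Finset.coe_filter]
  rfl

section splitRep

variable {W : Type*} [AddCommGroup W] [Module (ZMod 2) W] {φ : α → W} {T : Set α} {a : α}

theorem sum_splitRep {S : Finset α} (ha : a ∉ S) :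
    ∑ x ∈ S, splitRep φ T a x = (∑ x ∈ S, φ x, (((S : Set α) ∩ T).ncard : ZMod 2)) := by
  classical
  rw [Finset.natCast_ncard_coe_inter, prod_mk_sum]
  refine Finset.sum_congr rfl fun x hx => ?_
  simp [splitRep, ne_of_mem_of_not_mem hx ha]

theorem map_fst_span_splitRep {A : Set α} (ha : a ∉ A) :
    (span (ZMod 2) (splitRep φ T a '' A)).map (LinearMap.fst (ZMod 2) W (ZMod 2)) =
      span (ZMod 2) (φ '' A) := by
  rw [map_span, image_image]
  exact congrArg _ (image_congr fun x hx => by simp [splitRep, ne_of_mem_of_not_mem hx ha])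

theorem IsRep.mem_span_splitRep_iff {M : Matroid α} (hM : IsRep M φ) {A : Set α}
    (hA : A ⊆ M.E) (hAfin : A.Finite) (ha : a ∉ A) :
    ((0 : W), (1 : ZMod 2)) ∈ span (ZMod 2) (splitRep φ T a '' A) ↔
      ∃ C ⊆ A, M.IsCircuit C ∧ Odd ((C ∩ T).ncard) := by
  classical
  rw [mem_span_image_iff_exists_finset_sum]
  constructor
  · rintro ⟨S, hSA, hS⟩
    rw [sum_splitRep fun h => ha (hSA h), Prod.mk.injEq] at hS
    by_contra! hno
    have hcycle := hM.sum_eq_zero_of_forall_isCircuit (fun x => if x ∈ T then (1 : ZMod 2) else 0)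
      (hSA.trans hA) hS.1 fun C hCS hC => by
        rw [← Finset.natCast_ncard_coe_inter, ZMod.natCast_eq_zero_iff_even,
          ← Nat.not_odd_iff_even]
        exact hno C ((Finset.coe_subset.2 hCS).trans hSA) hC
    rw [← Finset.natCast_ncard_coe_inter, hS.2] at hcycle
    exact one_ne_zero hcycle
  · rintro ⟨C, hCA, hC, hodd⟩
    lift C to Finset α using hAfin.subset hCA
    refine ⟨C, hCA, ?_⟩
    rw [sum_splitRep fun h => ha (hCA h), hM.sum_eq_zero_of_isCircuit hC, hodd.natCast_zmod_two]

end splitRep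

theorem eleSplit_rank_of_not_mem_general {α W : Type*} [AddCommGroup W] [Module (ZMod 2) W]
    (M N : Matroid α) (φ : α → W) (hM : IsRep M φ) (T : Set α)
    (hfin : M.E.Finite) (a : α) (hN : IsEleSplit M φ T a N)
    (A : Set α) (hA : A ⊆ M.E) :
    ((∃ C ⊆ A, MCircuit M C ∧ Odd ((C ∩ T).ncard)) → mrank N A = mrank M A + 1) ∧
    ((¬ ∃ C ⊆ A, MCircuit M C ∧ Odd ((C ∩ T).ncard)) → mrank N A = mrank M A) := by
  simp only [MCircuit, ← Matroid.isCircuit_def]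
  obtain ⟨haE, hNE, hNrep⟩ := hN
  have hAfin : A.Finite := hfin.subset hA
  have ha : a ∉ A := fun h => haE (hA h)
  have := FiniteDimensional.span_of_finite (ZMod 2) (hAfin.image (splitRep φ T a))
  rw [hNrep.mrank_eq_finrank_span (hNE ▸ hA.trans (subset_insert a M.E)) hAfin,
    finrank_eq_finrank_map_fst_add, map_fst_span_splitRep ha, ← hM.mrank_eq_finrank_span hA hAfin,
    hM.mem_span_splitRep_iff hA hAfin ha]
  refine ⟨fun h => ?_, fun h => ?_⟩
  · rw [if_pos h]
  · rw [if_neg h, add_zero]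

/-- For A ⊆ E(M): if A contains a circuit of M meeting T in an odd number of elements then
the rank of A goes up by one in M'_T, and otherwise it is unchanged. -/
theorem eleSplit_rank_of_not_mem {α W : Type*} [AddCommGroup W] [Module (ZMod 2) W]
    (M N : Matroid α) (φ : α → W) (hM : IsRep M φ) (T : Set α) (hT : T ⊆ M.E)
    (hfin : M.E.Finite) (a : α) (hN : IsEleSplit M φ T a N)
    (A : Set α) (hA : A ⊆ M.E) :
    ((∃ C ⊆ A, MCircuit M C ∧ Odd ((C ∩ T).ncard)) → mrank N A = mrank M A + 1) ∧
    ((¬ ∃ C ⊆ A, MCircuit M C ∧ Odd ((C ∩ T).ncard)) → mrank N A = mrank M A) :=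
  eleSplit_rank_of_not_mem_general M N φ hM T hfin a hN A hA
end

section
/- Let n ≥ 2, let M be an n-connected binary matroid with |E(M)| ≥ 2n-2, and let T ⊆ E(M) with |T| = n-1. If every cocircuit Q of M with Q ∩ T ≠ ∅ satisfies |Q| ≥ 2|Q ∩ T|, then the element splitting matroid M'_T is n-connected. -/
open Set

variable {α : Type*}

/-!
Let `ψ` be the columns of `M'_T`: `φ x` with the extra coordinate `[x ∈ T]`, and `ψ a = (0, 1)`.
For a `k`-separation `(A, B)` of `M'_T` with `a ∈ B`, put `B' = B - a`. Then
`r'(B) = r(B') + 1` and `r'(E + a) = r(E) + 1`, while `r'(A) = r(A) + 1` when `(0, 1)` lies in the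
span of `ψ(A)`, and `(A, B')` is then a `(k - 1)`-separation of `M`. Otherwise `r'(A) = r(A)` and
some functional `f` satisfies `f (φ x) = [x ∈ T]` on `A`, so its cocycle `C = {x | f (φ x) ≠ 0}`
meets `A` in exactly `T ∩ A`. Over `GF(2)` a cocycle is a disjoint union of cocircuits, so
`|C| ≥ 2 |C ∩ T|`, which forces `|T| ≤ |B'|`. Hence either `(A, B')` is a `k`-separation of `M`,
or `n - 1 = |T| ≤ |B'| < k < n`.
-/

open Submodule Module

section LastCoordinate

variable {K W : Type*} [Field K] [AddCommGroup W] [Module K W] {S : Set (W × K)}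

theorem exists_linearMap_fst_eq_snd (h : ((0 : W), (1 : K)) ∉ span K S) :
    ∃ f : W →ₗ[K] K, ∀ v ∈ S, f v.1 = v.2 := by
  obtain ⟨g, hg1, hSg⟩ := exists_le_ker_of_notMem h
  refine ⟨-(g (0, 1))⁻¹ • g.comp (LinearMap.inl K W K), fun v hv => ?_⟩
  have hgv : g v = 0 := hSg (subset_span hv)
  rw [show v = (v.1, 0) + v.2 • ((0 : W), (1 : K)) by ext <;> simp, map_add, map_smul,
    smul_eq_mul] at hgv
  simp only [LinearMap.smul_apply, LinearMap.comp_apply, LinearMap.inl_apply, smul_eq_mul]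
  rw [eq_neg_of_add_eq_zero_left hgv]
  field_simp

theorem finrank_span_eq_finrank_span_image_fst {f : W →ₗ[K] K} (hf : ∀ v ∈ S, f v.1 = v.2) :
    finrank K (span K S) = finrank K (span K (Prod.fst '' S)) := by
  set g := LinearMap.id.prod f
  have hS : g '' (Prod.fst '' S) = S := by
    rw [← image_comp]
    exact (image_congr (g := id) fun v hv => by simp [g, hf v hv]).trans (image_id S)
  conv_lhs => rw [← hS, span_image]
  exact (equivMapOfInjective g (fun x y h => congrArg Prod.fst h) _).finrank_eq.symm

theorem finrank_span_eq_finrank_span_image_fst_add_one (hS : S.Finite)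
    (h : ((0 : W), (1 : K)) ∈ span K S) :
    finrank K (span K S) = finrank K (span K (Prod.fst '' S)) + 1 := by
  set p := span K (Prod.fst '' S)
  have hp : p = (span K S).map (LinearMap.fst K W K) := by rw [map_span, LinearMap.coe_fst]
  have hprod : span K S = p.prod ⊤ := by
    refine le_antisymm (span_le.2 fun v hv => ⟨subset_span (mem_image_of_mem _ hv), trivial⟩) ?_
    rintro ⟨w, t⟩ ⟨hw, -⟩
    obtain ⟨u, hu, rfl⟩ := (SetLike.ext_iff.1 hp w).1 hw
    convert add_mem hu (smul_mem _ (t - u.2) h) using 1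
    ext <;> simp
  have : FiniteDimensional K p := FiniteDimensional.span_of_finite K (hS.image _)
  have key := finrank_sup_add_finrank_inf_eq (p.map (LinearMap.inl K W K))
    ((⊤ : Submodule K K).map (LinearMap.inr K W K))
  rwa [← (equivMapOfInjective _ LinearMap.inl_injective p).finrank_eq,
    ← (equivMapOfInjective _ LinearMap.inr_injective ⊤).finrank_eq, finrank_top, finrank_self,
    map_inl, map_inr, prod_sup_prod, prod_inf_prod, sup_bot_eq, bot_sup_eq, inf_bot_eq,
    bot_inf_eq, prod_bot, finrank_bot, add_zero, ← hprod] at key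

end LastCoordinate

section Representation

variable {W : Type*} [AddCommGroup W] [Module (ZMod 2) W] {M : Matroid α} {φ : α → W}
  {I X Q : Set α}

theorem IsRep.indep_iff (hM : IsRep M φ) :
    M.Indep I ↔ I ⊆ M.E ∧ LinearIndepOn (ZMod 2) φ I :=
  hM I

theorem IsRep.indep_insert_iff (hM : IsRep M φ) (hI : M.Indep I) {x : α} (hx : x ∈ M.E \ I) :
    M.Indep (insert x I) ↔ φ x ∉ span (ZMod 2) (φ '' I) := by
  simp [hM.indep_iff, insert_subset_iff, linearIndepOn_insert hx.2, hx.1, hI.subset_ground,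
    (hM.indep_iff.1 hI).2]

theorem IsRep.image_ground_subset_span_iff_isBase (hM : IsRep M φ) (hI : M.Indep I) :
    φ '' M.E ⊆ span (ZMod 2) (φ '' I) ↔ M.IsBase I := by
  refine ⟨fun h => hI.isBase_of_forall_insert fun x hx => ?_, fun hB => ?_⟩
  · rw [hM.indep_insert_iff hI hx, not_not]
    exact h (mem_image_of_mem φ hx.1)
  · rintro _ ⟨x, hx, rfl⟩
    by_cases hxI : x ∈ I
    · exact subset_span (mem_image_of_mem φ hxI)
    · exact not_not.1 <|
        (hM.indep_insert_iff hI ⟨hx, hxI⟩).not.1 (hB.insert_dep ⟨hx, hxI⟩).not_indep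

theorem IsRep.ncard_eq_finrank (hM : IsRep M φ) (hI : M.Indep I) (hIfin : I.Finite) :
    I.ncard = finrank (ZMod 2) (span (ZMod 2) (φ '' I)) := by
  have := hIfin.fintype
  rw [image_eq_range, finrank_span_eq_card (hM.indep_iff.1 hI).2, Set.ncard_eq_toFinset_card',
    Set.toFinset_card]

theorem IsRep.mrank_eq_finrank (hM : IsRep M φ) (hfin : X.Finite) (hX : X ⊆ M.E) :
    mrank M X = finrank (ZMod 2) (span (ZMod 2) (φ '' X)) := by
  obtain ⟨I, hIX, -, hXI, hI⟩ :=
    exists_linearIndepOn_extension (linearIndepOn_empty (ZMod 2) φ) (empty_subset X)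
  have hIind : M.Indep I := hM.indep_iff.2 ⟨hIX.trans hX, hI⟩
  have : FiniteDimensional (ZMod 2) (span (ZMod 2) (φ '' X)) :=
    FiniteDimensional.span_of_finite _ (hfin.image φ)
  refine IsGreatest.csSup_eq ⟨⟨I, hIind, hIX, ?_⟩, ?_⟩
  · rw [hM.ncard_eq_finrank hIind (hfin.subset hIX),
      le_antisymm (span_mono (image_mono hIX)) (span_le.2 hXI)]
  · rintro _ ⟨J, hJ, hJX, rfl⟩
    rw [hM.ncard_eq_finrank hJ (hfin.subset hJX)]
    exact Submodule.finrank_mono (span_mono (image_mono hJX))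

theorem IsRep.mrank_union_le (hM : IsRep M φ) (hfin : M.E.Finite) {A B : Set α} (hA : A ⊆ M.E)
    (hB : B ⊆ M.E) : mrank M (A ∪ B) ≤ mrank M A + mrank M B := by
  have := FiniteDimensional.span_of_finite (ZMod 2) ((hfin.subset hA).image φ)
  have := FiniteDimensional.span_of_finite (ZMod 2) ((hfin.subset hB).image φ)
  rw [hM.mrank_eq_finrank (hfin.subset (union_subset hA hB)) (union_subset hA hB),
    hM.mrank_eq_finrank (hfin.subset hA) hA, hM.mrank_eq_finrank (hfin.subset hB) hB,
    image_union, span_union]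
  exact Submodule.finrank_add_le_finrank_add_finrank _ _

theorem IsRep.dual_indep_iff (hM : IsRep M φ) (hQ : Q ⊆ M.E) :
    M✶.Indep Q ↔ φ '' M.E ⊆ span (ZMod 2) (φ '' (M.E \ Q)) := by
  rw [Matroid.dual_indep_iff_exists', and_iff_right hQ]
  constructor
  · rintro ⟨B, hB, hQB⟩
    exact ((hM.image_ground_subset_span_iff_isBase hB.indep).2 hB).trans
      (span_mono (image_mono (subset_sdiff.2 ⟨hB.subset_ground, hQB.symm⟩)))
  · intro h
    obtain ⟨I, hIX, -, hXI, hI⟩ :=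
      exists_linearIndepOn_extension (linearIndepOn_empty (ZMod 2) φ) (empty_subset (M.E \ Q))
    have hIind : M.Indep I := hM.indep_iff.2 ⟨hIX.trans sdiff_subset, hI⟩
    refine ⟨I, (hM.image_ground_subset_span_iff_isBase hIind).1 (h.trans (span_le.2 hXI)), ?_⟩
    exact disjoint_of_subset_right hIX disjoint_sdiff_right

end Representation

section Cocycle

variable {W : Type*} [AddCommGroup W] [Module (ZMod 2) W] {M : Matroid α} {φ : α → W}
  {Q T : Set α} {f g : W →ₗ[ZMod 2] ZMod 2}

def cocycle (M : Matroid α) (φ : α → W) (f : W →ₗ[ZMod 2] ZMod 2) : Set α :=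
  {x ∈ M.E | f (φ x) ≠ 0}

theorem cocycle_subset_ground : cocycle M φ f ⊆ M.E := fun _ hx => hx.1

theorem cocycle_add_of_subset (h : cocycle M φ g ⊆ cocycle M φ f) :
    cocycle M φ (f + g) = cocycle M φ f \ cocycle M φ g := by
  ext x
  have hx := @h x
  simp only [cocycle, mem_ofPred_eq, mem_sdiff, LinearMap.add_apply] at hx ⊢
  generalize f (φ x) = s, g (φ x) = t at hx ⊢
  by_cases hxE : x ∈ M.E <;> simp only [hxE, true_and, false_and] at hx ⊢
  revert s t; decide

theorem IsRep.dual_dep_cocycle (hM : IsRep M φ) (hne : (cocycle M φ f).Nonempty) :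
    M✶.Dep (cocycle M φ f) := by
  refine ⟨fun hind => ?_, cocycle_subset_ground⟩
  obtain ⟨x, hxE, hfx⟩ := hne
  have hker : span (ZMod 2) (φ '' (M.E \ cocycle M φ f)) ≤ LinearMap.ker f := by
    rw [span_le]
    rintro _ ⟨y, ⟨hyE, hy⟩, rfl⟩
    exact not_not.1 fun hfy => hy ⟨hyE, hfy⟩
  exact hfx (hker ((hM.dual_indep_iff cocycle_subset_ground).1 hind (mem_image_of_mem φ hxE)))

theorem IsRep.exists_cocycle_subset_of_dual_dep (hM : IsRep M φ) (hQ : M✶.Dep Q) :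
    ∃ f, (cocycle M φ f).Nonempty ∧ cocycle M φ f ⊆ Q := by
  have hQE : Q ⊆ M.E := hQ.subset_ground
  obtain ⟨_, ⟨x, hxE, rfl⟩, hx⟩ := not_subset.1 ((hM.dual_indep_iff hQE).not.1 hQ.not_indep)
  obtain ⟨f, hfx, hf⟩ := exists_le_ker_of_notMem hx
  refine ⟨f, ⟨x, hxE, hfx⟩, fun y ⟨hyE, hfy⟩ => not_not.1 fun hyQ => hfy ?_⟩
  exact hf (subset_span (mem_image_of_mem φ ⟨hyE, hyQ⟩))

theorem IsRep.exists_mCocircuit_cocycle_subset (hM : IsRep M φ)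
    (hne : (cocycle M φ f).Nonempty) :
    ∃ g, MCocircuit M (cocycle M φ g) ∧ cocycle M φ g ⊆ cocycle M φ f := by
  obtain ⟨Q, hQf, hQ⟩ := (hM.dual_dep_cocycle hne).exists_isCircuit_subset
  obtain ⟨g, hgne, hgQ⟩ := hM.exists_cocycle_subset_of_dual_dep hQ.dep
  have hQg : Q = cocycle M φ g := hgQ.antisymm' (hQ.2 (hM.dual_dep_cocycle hgne) hgQ)
  exact ⟨g, hQg ▸ hQ, hQg ▸ hQf⟩

theorem IsRep.cocycle_induction (hM : IsRep M φ) (hfin : M.E.Finite) {P : Set α → Prop}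
    (empty : P ∅)
    (union : ∀ Q D, MCocircuit M Q → Disjoint Q D → D ⊆ M.E → P D → P (Q ∪ D))
    (f : W →ₗ[ZMod 2] ZMod 2) : P (cocycle M φ f) := by
  induction hc : (cocycle M φ f).ncard using Nat.strong_induction_on generalizing f with
  | _ m ih =>
    obtain hemp | hne := (cocycle M φ f).eq_empty_or_nonempty
    · exact hemp ▸ empty
    obtain ⟨g, hg, hgf⟩ := hM.exists_mCocircuit_cocycle_subset hne
    have hfg := cocycle_add_of_subset hgf
    rw [← union_sdiff_cancel hgf, ← hfg]
    refine union _ _ hg (hfg ▸ disjoint_sdiff_right) cocycle_subset_ground (ih _ ?_ _ rfl)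
    rw [← hc, hfg]
    refine ncard_lt_ncard (sdiff_ssubset_left_iff.2 ?_) (hfin.subset cocycle_subset_ground)
    rw [inter_eq_right.2 hgf]
    exact Matroid.Dep.nonempty hg.1

theorem IsRep.two_mul_ncard_inter_le_ncard_cocycle (hM : IsRep M φ) (hfin : M.E.Finite)
    (hQ : ∀ Q, MCocircuit M Q → (Q ∩ T).Nonempty → 2 * (Q ∩ T).ncard ≤ Q.ncard)
    (f : W →ₗ[ZMod 2] ZMod 2) :
    2 * (cocycle M φ f ∩ T).ncard ≤ (cocycle M φ f).ncard := by
  refine hM.cocycle_induction hfin (P := fun D => 2 * (D ∩ T).ncard ≤ D.ncard) (by simp)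
    (fun Q D hQc hQD hD ih => ?_) f
  have hQfin : Q.Finite := hfin.subset (show M✶.Dep Q from hQc.1).subset_ground
  have hDfin : D.Finite := hfin.subset hD
  have hQT : 2 * (Q ∩ T).ncard ≤ Q.ncard := by
    obtain h | h := (Q ∩ T).eq_empty_or_nonempty
    · simp [h]
    · exact hQ Q hQc h
  rw [union_inter_distrib_right, ncard_union_eq hQD hQfin hDfin,
    ncard_union_eq (hQD.mono inter_subset_left inter_subset_left) (hQfin.inter_of_left T)
      (hDfin.inter_of_left T)]
  omega

end Cocycle

section ElementSplitting

variable {W : Type*} [AddCommGroup W] [Module (ZMod 2) W] {M N : Matroid α} {φ : α → W}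
  {T X : Set α} {a x : α}

theorem splitRep_self : splitRep φ T a a = (0, 1) := by simp [splitRep]

theorem splitRep_fst_of_ne (hx : x ≠ a) : (splitRep φ T a x).1 = φ x := by
  simp [splitRep, hx]

theorem splitRep_snd_ne_zero_iff (hx : x ≠ a) : (splitRep φ T a x).2 ≠ 0 ↔ x ∈ T := by
  by_cases hxT : x ∈ T <;> simp [splitRep, hx, hxT]

theorem image_fst_image_splitRep (ha : a ∉ X) : Prod.fst '' (splitRep φ T a '' X) = φ '' X := by
  rw [← image_comp]
  exact image_congr fun x hx => splitRep_fst_of_ne (ne_of_mem_of_not_mem hx ha)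

theorem IsEleSplit.mrank_eq_finrank (hN : IsEleSplit M φ T a N) (hfin : M.E.Finite)
    (hX : X ⊆ N.E) : mrank N X = finrank (ZMod 2) (span (ZMod 2) (splitRep φ T a '' X)) :=
  hN.2.2.mrank_eq_finrank ((hN.2.1 ▸ hfin.insert a).subset hX) hX

theorem IsEleSplit.mrank_insert (hM : IsRep M φ) (hN : IsEleSplit M φ T a N)
    (hfin : M.E.Finite) (hX : X ⊆ M.E) : mrank N (insert a X) = mrank M X + 1 := by
  have hXfin : X.Finite := hfin.subset hX
  have hS : Prod.fst '' (splitRep φ T a '' insert a X) = insert 0 (φ '' X) := by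
    rw [image_insert_eq, image_insert_eq, splitRep_self,
      image_fst_image_splitRep fun h => hN.1 (hX h)]
  have h01 : ((0 : W), (1 : ZMod 2)) ∈ span (ZMod 2) (splitRep φ T a '' insert a X) :=
    subset_span ⟨a, mem_insert a X, splitRep_self⟩
  rw [hN.mrank_eq_finrank hfin (hN.2.1 ▸ insert_subset_insert hX), hM.mrank_eq_finrank hXfin hX,
    finrank_span_eq_finrank_span_image_fst_add_one ((hXfin.insert a).image _) h01, hS,
    span_insert_zero]

theorem IsEleSplit.mrank_eq_add_one_or_exists_cocycle (hM : IsRep M φ)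
    (hN : IsEleSplit M φ T a N) (hfin : M.E.Finite) (hX : X ⊆ M.E) :
    mrank N X = mrank M X + 1 ∨
      mrank N X = mrank M X ∧ ∃ f, cocycle M φ f ∩ X = T ∩ X := by
  have haX : a ∉ X := fun h => hN.1 (hX h)
  have hXfin : X.Finite := hfin.subset hX
  have hXN : X ⊆ N.E := hN.2.1 ▸ hX.trans (subset_insert a M.E)
  rw [hN.mrank_eq_finrank hfin hXN, hM.mrank_eq_finrank hXfin hX,
    ← image_fst_image_splitRep (φ := φ) (T := T) haX]
  by_cases h : ((0 : W), (1 : ZMod 2)) ∈ span (ZMod 2) (splitRep φ T a '' X)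
  · exact Or.inl (finrank_span_eq_finrank_span_image_fst_add_one (hXfin.image _) h)
  obtain ⟨f, hf⟩ := exists_linearMap_fst_eq_snd h
  refine Or.inr ⟨finrank_span_eq_finrank_span_image_fst hf, f, ?_⟩
  ext x
  refine and_congr_left fun hx => ?_
  have hxa : x ≠ a := ne_of_mem_of_not_mem hx haX
  have hfx := hf _ (mem_image_of_mem (splitRep φ T a) hx)
  rw [splitRep_fst_of_ne hxa] at hfx
  rw [← splitRep_snd_ne_zero_iff (φ := φ) (T := T) hxa, ← hfx]
  exact and_iff_right (hX hx)

end ElementSplitting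

section Separation

theorem IsKSeparation.symm {M : Matroid α} {k : ℕ} {A B : Set α} (h : IsKSeparation M k A B) :
    IsKSeparation M k B A := by
  obtain ⟨hAB, hdisj, hA, hB, hr⟩ := h
  exact ⟨union_comm A B ▸ hAB, hdisj.symm, hB, hA, by omega⟩

theorem ncard_le_of_inter_eq_of_two_mul_ncard_inter_le {A B C T : Set α} (hC : C.Finite)
    (hT : T.Finite) (hB : B.Finite) (hCT : C ∩ A = T ∩ A) (hCB : C \ A ⊆ B)
    (hTB : T \ A ⊆ B) (h : 2 * (C ∩ T).ncard ≤ C.ncard) : T.ncard ≤ B.ncard := by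
  have hC' := ncard_inter_add_ncard_sdiff_eq_ncard C A hC
  have hT' := ncard_inter_add_ncard_sdiff_eq_ncard T A hT
  have hCT' := ncard_inter_add_ncard_sdiff_eq_ncard (C ∩ T) A (hC.inter_of_left T)
  have hunion := ncard_union_add_ncard_inter (C \ A) (T \ A) hC.sdiff hT.sdiff
  have hle := ncard_le_ncard (union_subset hCB hTB) hB
  rw [inter_right_comm, hCT, inter_right_comm, inter_self] at hCT'
  rw [hCT] at hC'
  rw [← sdiff_inter_distrib_right] at hunion
  omega

variable {W : Type*} [AddCommGroup W] [Module (ZMod 2) W] {M N : Matroid α} {φ : α → W}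
  {T : Set α} {a : α} {n k : ℕ} {A B : Set α}

theorem IsEleSplit.union_sdiff_singleton_eq_ground (hN : IsEleSplit M φ T a N)
    (hAB : A ∪ B = N.E) (hdisj : Disjoint A B) (haB : a ∈ B) : A ∪ B \ {a} = M.E := by
  rw [← sdiff_singleton_eq_self (hdisj.notMem_of_mem_right haB), ← union_sdiff_distrib, hAB,
    hN.2.1, insert_sdiff_self_of_notMem hN.1]

theorem IsEleSplit.not_isKSeparation_of_mem (hM : IsRep M φ) (hN : IsEleSplit M φ T a N)
    (hfin : M.E.Finite) (hconn : NConnected M n) (hT : T ⊆ M.E) (hTcard : T.ncard = n - 1)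
    (hQ : ∀ Q, MCocircuit M Q → (Q ∩ T).Nonempty → 2 * (Q ∩ T).ncard ≤ Q.ncard)
    (hk : 1 ≤ k) (hkn : k < n) (haB : a ∈ B) : ¬ IsKSeparation N k A B := by
  rintro ⟨hAB, hdisj, hA, hB, hr⟩
  set B' := B \ {a}
  have hpart : A ∪ B' = M.E := hN.union_sdiff_singleton_eq_ground hAB hdisj haB
  have hAE : A ⊆ M.E := hpart ▸ subset_union_left
  have hB'E : B' ⊆ M.E := hpart ▸ subset_union_right
  have hdisj' : Disjoint A B' := hdisj.mono_right sdiff_subset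
  have hBfin : B.Finite := (hN.2.1 ▸ hfin.insert a).subset (hAB ▸ subset_union_right)
  have hBcard : B'.ncard + 1 = B.ncard := ncard_sdiff_singleton_add_one haB hBfin
  have hrB : mrank N B = mrank M B' + 1 := by
    rw [← hN.mrank_insert hM hfin hB'E, insert_sdiff_singleton, insert_eq_of_mem haB]
  have hrE : mrank N N.E = mrank M M.E + 1 := hN.2.1 ▸ hN.mrank_insert hM hfin subset_rfl
  obtain hrA | ⟨hrA, f, hfA⟩ := hN.mrank_eq_add_one_or_exists_cocycle hM hfin hAE
  · have hsub := hM.mrank_union_le hfin hAE hB'E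
    rw [hpart] at hsub
    exact hconn (k - 1) A B' (by omega) (by omega) ⟨hpart, hdisj', by omega, by omega, by omega⟩
  by_cases hkB' : k ≤ B'.ncard
  · exact hconn k A B' hk hkn ⟨hpart, hdisj', hA, hkB', by omega⟩
  have hTB' := ncard_le_of_inter_eq_of_two_mul_ncard_inter_le (hfin.subset cocycle_subset_ground)
    (hfin.subset hT) (hfin.subset hB'E) hfA
    (sdiff_subset_iff.2 (hpart ▸ cocycle_subset_ground)) (sdiff_subset_iff.2 (hpart ▸ hT))
    (hM.two_mul_ncard_inter_le_ncard_cocycle hfin hQ f)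
  omega

end Separation

theorem eleSplit_nConnected_of_cocircuit_cond_general {α W : Type*}
    [AddCommGroup W] [Module (ZMod 2) W]
    (n : ℕ) (M N : Matroid α) (φ : α → W) (hM : IsRep M φ)
    (hfin : M.E.Finite) (hconn : NConnected M n)
    (T : Set α) (hT : T ⊆ M.E) (hTcard : T.ncard = n - 1)
    (a : α) (hN : IsEleSplit M φ T a N)
    (hQ : ∀ Q : Set α, MCocircuit M Q → (Q ∩ T).Nonempty → 2 * (Q ∩ T).ncard ≤ Q.ncard) :
    NConnected N n := by
  intro k A B hk hkn hsep
  obtain haA | haB : a ∈ A ∪ B := hsep.1 ▸ hN.2.1 ▸ mem_insert a M.E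
  · exact hN.not_isKSeparation_of_mem hM hfin hconn hT hTcard hQ hk hkn haA hsep.symm
  · exact hN.not_isKSeparation_of_mem hM hfin hconn hT hTcard hQ hk hkn haB hsep

/-- If every cocircuit Q of M meeting T satisfies |Q| ≥ 2|Q ∩ T|, then M'_T is
n-connected. -/
theorem eleSplit_nConnected_of_cocircuit_cond {α W : Type*}
    [AddCommGroup W] [Module (ZMod 2) W]
    (n : ℕ) (hn : 2 ≤ n) (M N : Matroid α) (φ : α → W) (hM : IsRep M φ)
    (hfin : M.E.Finite) (hcard : 2 * n - 2 ≤ M.E.ncard) (hconn : NConnected M n)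
    (T : Set α) (hT : T ⊆ M.E) (hTcard : T.ncard = n - 1)
    (a : α) (hN : IsEleSplit M φ T a N)
    (hQ : ∀ Q : Set α, MCocircuit M Q → (Q ∩ T).Nonempty → 2 * (Q ∩ T).ncard ≤ Q.ncard) :
    NConnected N n :=
  eleSplit_nConnected_of_cocircuit_cond_general n M N φ hM hfin hconn T hT hTcard a hN hQ
end
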